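/- arXiv:0708.0714 — 2 statements merged into one kernel-verified Lean document; each statement's English description precedes it below -/
import Mathlib

section
/- The minimal faithful permutation degree of G(4,4,3) is 12. -/
open Multiplicative

/-- Cyclic group of order m, multiplicatively. -/
abbrev Cyc (m : ℕ) := Multiplicative (ZMod m)

/-- Minimal faithful permutation degree. -/
noncomputable def mu (G : Type*) [Group G] : ℕ :=
  sInf {n | ∃ f : G →* Equiv.Perm (Fin n), Function.Injective f}

/-- Sym(n) acting on the base group (C_m)^n by permuting coordinates. -/
def wreathAut (m n : ℕ) : Equiv.Perm (Fin n) →* MulAut (Fin n → Cyc m) where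
  toFun σ :=
    { toFun := fun θ => θ ∘ σ.symm
      invFun := fun θ => θ ∘ σ
      left_inv := fun θ => by ext i; simp
      right_inv := fun θ => by ext i; simp
      map_mul' := fun θ₁ θ₂ => rfl }
  map_one' := by ext θ i; rfl
  map_mul' := fun σ τ => by ext θ i; rfl

/-- The wreath product C_m ≀ Sym(n). -/
abbrev Wr (m n : ℕ) := SemidirectProduct (Fin n → Cyc m) (Equiv.Perm (Fin n)) (wreathAut m n)

/-- A(m,p,n) = {θ ∈ (C_m)^n | (θ₁⋯θₙ)^{m/p} = 1}. -/
def Apn (m p n : ℕ) : Subgroup (Fin n → Cyc m) where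
  carrier := {θ | (∏ i, θ i) ^ (m / p) = 1}
  one_mem' := by simp
  mul_mem' := by
    intro α β hα hβ
    simp only [Set.mem_setOf_eq, Pi.mul_apply] at *
    rw [Finset.prod_mul_distrib, mul_pow, hα, hβ, one_mul]
  inv_mem' := by
    intro α hα
    simp only [Set.mem_setOf_eq, Pi.inv_apply] at *
    rw [Finset.prod_inv_distrib, inv_pow, hα, inv_one]

lemma apn_act_mem {m p n : ℕ} (σ : Equiv.Perm (Fin n)) {θ : Fin n → Cyc m}
    (hθ : θ ∈ Apn m p n) : wreathAut m n σ θ ∈ Apn m p n := by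
  have : ∏ i, θ (σ.symm i) = ∏ i, θ i := Equiv.prod_comp σ.symm θ
  simpa [Apn, wreathAut, Subgroup.mem_mk, Set.mem_setOf_eq, Function.comp, this] using hθ

/-- G(m,p,n) = A(m,p,n) ⋊ Sym(n), realized inside C_m ≀ Sym(n). -/
def Gmpn (m p n : ℕ) : Subgroup (Wr m n) where
  carrier := {g | g.left ∈ Apn m p n}
  one_mem' := by
    show (1 : Wr m n).left ∈ Apn m p n
    rw [SemidirectProduct.one_left]
    exact one_mem _
  mul_mem' := by
    intro g h hg hh
    show (g * h).left ∈ Apn m p n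
    rw [SemidirectProduct.mul_left]
    exact mul_mem hg (apn_act_mem g.right hh)
  inv_mem' := by
    intro g hg
    show g⁻¹.left ∈ Apn m p n
    rw [SemidirectProduct.inv_left]
    exact apn_act_mem _ (inv_mem hg)

/-! The element `z = (2, 2, 0)` of the base group `V = A(4,4,3) ≅ (ℤ/4)²` lies in every subgroup
`H` of index `< 12`; since point stabilizers of an action of degree `d` have index `≤ d`, `z` acts
trivially in every action of degree `< 12`. With `ρ : G → Sym(3)` the projection,
`[V : H ∩ V] · 6 = |ρ H| · [G : H]`. If `3 ∤ |ρ H|` this forces `[V : H ∩ V] ≤ 2`, so `H` contains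
every square of `V`, among them `z = (1, 1, 2)²`. Otherwise `H` contains an element acting on `V`
by a 3-cycle of coordinates, and `H ∩ V`, nontrivial because `[G : H] < 16`, contains an
involution; the involutions `(2,2,0), (2,0,2), (0,2,2)` of `V` form one orbit under that 3-cycle,
so again `z ∈ H`. The bound `12` is attained by the action of `C₄ ≀ Sym(3)` on `Fin 3 × ℤ/4`. -/

open SemidirectProduct

section

variable {G : Type*} [Group G]

theorem exists_injective_hom_perm_fin_of_injective {α : Type*} [Fintype α] {f : G →* Equiv.Perm α}
    (hf : Function.Injective f) :
    ∃ f' : G →* Equiv.Perm (Fin (Fintype.card α)), Function.Injective f' :=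
  ⟨(Fintype.equivFin α).permCongrHom.toMonoidHom.comp f,
    (Fintype.equivFin α).permCongrHom.injective.comp hf⟩

theorem le_of_injective_of_forall_index_lt_mem {z : G} (hz : z ≠ 1) {N : ℕ}
    (hN : ∀ H : Subgroup G, H.index < N → z ∈ H) {n : ℕ} {f : G →* Equiv.Perm (Fin n)}
    (hf : Function.Injective f) : N ≤ n := by
  by_contra! hn
  let := MulAction.compHom (Fin n) f
  refine hz (hf ?_)
  rw [map_one]
  ext ω
  have hstab : z ∈ MulAction.stabilizer G ω := hN _ <| by
    rw [MulAction.index_stabilizer]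
    exact (Set.ncard_le_card _).trans_lt (by simpa using hn)
  exact congrArg Fin.val hstab

theorem Subgroup.relIndex_mul_index_eq (H K : Subgroup G) :
    H.relIndex K * K.index = K.relIndex H * H.index := by
  rw [← inf_relIndex_right H K, relIndex_mul_index inf_le_right, ← inf_relIndex_left H K,
    relIndex_mul_index inf_le_left]

theorem Subgroup.sq_mem_of_index_dvd_two {H : Subgroup G} (h : H.index ∣ 2) (a : G) :
    a ^ 2 ∈ H := by
  rcases (Nat.dvd_prime Nat.prime_two).1 h with h | h
  · simp [Subgroup.index_eq_one.1 h]
  · exact Subgroup.sq_mem_of_index_two h a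

end

theorem SemidirectProduct.mul_inl_mul_inv {N H : Type*} [CommGroup N] [Group H]
    {φ : H →* MulAut N} (g : N ⋊[φ] H) (n : N) : g * inl n * g⁻¹ = inl (φ g.right n) := by
  ext <;> simp [mul_comm]

instance SemidirectProduct.finite {N H : Type*} [Group N] [Group H] {φ : H →* MulAut N}
    [Finite N] [Finite H] : Finite (N ⋊[φ] H) :=
  Finite.of_equiv _ equivProd.symm

namespace Wr

def toPermProd (m n : ℕ) : Wr m n →* Equiv.Perm (Fin n × ZMod m) where
  toFun g :=
    { toFun := fun x => (g.right x.1, x.2 + toAdd (g.left (g.right x.1)))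
      invFun := fun x => (g.right⁻¹ x.1, x.2 - toAdd (g.left x.1))
      left_inv := fun x => by simp
      right_inv := fun x => by simp }
  map_one' := by ext x <;> simp
  map_mul' g h := by
    ext x
    · simp [SemidirectProduct.mul_right]
    · simp [SemidirectProduct.mul_left, SemidirectProduct.mul_right, wreathAut]
      ring

theorem toPermProd_injective (m n : ℕ) : Function.Injective (toPermProd m n) := by
  rw [injective_iff_map_eq_one]
  intro g hg
  have hfix (x : Fin n × ZMod m) : toPermProd m n g x = x := by rw [hg]; rfl
  have hright : g.right = 1 := Equiv.ext fun i => congrArg Prod.fst (hfix (i, 0))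
  have hleft : g.left = 1 := funext fun i => by
    simpa [toPermProd, hright] using congrArg Prod.snd (hfix (i, 0))
  exact SemidirectProduct.ext hleft hright

end Wr

instance (m p n : ℕ) : DecidablePred (· ∈ Apn m p n) :=
  fun θ => decidable_of_iff ((∏ i, θ i) ^ (m / p) = 1) Iff.rfl

namespace Gmpn

theorem exists_injective_hom_perm_fin (m p n : ℕ) [NeZero m] :
    ∃ f : Gmpn m p n →* Equiv.Perm (Fin (n * m)), Function.Injective f := by
  have := exists_injective_hom_perm_fin_of_injective
    (f := (Wr.toPermProd m n).comp (Gmpn m p n).subtype)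
    ((Wr.toPermProd_injective m n).comp (Gmpn m p n).subtype_injective)
  rwa [Fintype.card_prod, Fintype.card_fin, ZMod.card] at this

variable {m p n : ℕ}

def toPerm : Gmpn m p n →* Equiv.Perm (Fin n) := rightHom.comp (Gmpn m p n).subtype

theorem toPerm_surjective : Function.Surjective (toPerm (m := m) (p := p) (n := n)) :=
  fun σ => ⟨⟨inr σ, one_mem (Apn m p n)⟩, rfl⟩

def ofBase : Apn m p n →* Gmpn m p n :=
  (inl.comp (Apn m p n).subtype).codRestrict _ fun θ => θ.2

theorem ofBase_injective : Function.Injective (ofBase (m := m) (p := p) (n := n)) :=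
  fun _ _ h => Subtype.ext (inl_injective (congrArg Subtype.val h))

theorem range_ofBase : (ofBase (m := m) (p := p) (n := n)).range = toPerm.ker := by
  ext g
  constructor
  · rintro ⟨θ, rfl⟩
    rfl
  · intro hg
    exact ⟨⟨g.1.left, g.2⟩, Subtype.ext (SemidirectProduct.ext rfl hg.symm)⟩

theorem card_ker_toPerm :
    Nat.card (toPerm (m := m) (p := p) (n := n)).ker = Nat.card (Apn m p n) := by
  rw [← range_ofBase]
  exact Nat.card_congr (MonoidHom.ofInjective ofBase_injective).toEquiv.symm

theorem index_ker_toPerm : (toPerm (m := m) (p := p) (n := n)).ker.index = n.factorial := by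
  rw [Subgroup.index_ker, MonoidHom.range_eq_top_of_surjective _ toPerm_surjective,
    Subgroup.card_top, Nat.card_perm, Nat.card_fin]

theorem mul_ofBase_mul_inv (g : Gmpn m p n) (θ : Apn m p n) :
    g * ofBase θ * g⁻¹ = ofBase ⟨wreathAut m n (toPerm g) θ, apn_act_mem _ θ.2⟩ :=
  Subtype.ext (mul_inl_mul_inv g.1 θ)

end Gmpn

namespace G443

open Gmpn

abbrev V : Subgroup (Gmpn 4 4 3) := toPerm.ker

def θ₀ : Fin 3 → Cyc 4 := ![ofAdd 2, ofAdd 2, 1]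

def z : Gmpn 4 4 3 := ofBase ⟨θ₀, by decide⟩

theorem z_ne_one : z ≠ 1 := fun h => by
  have := congrArg Subtype.val (ofBase_injective (h.trans (map_one ofBase).symm))
  exact absurd this (by decide)

theorem card_V : Nat.card V = 16 := by
  rw [card_ker_toPerm, Nat.card_eq_fintype_card]
  decide

theorem eq_θ₀_of_involution : ∀ σ : Equiv.Perm (Fin 3), σ ≠ 1 → σ ^ 3 = 1 →
    ∀ θ ∈ Apn 4 4 3, θ * θ = 1 → θ ≠ 1 →
      θ₀ = θ ∨ θ₀ = wreathAut 4 3 σ θ ∨ θ₀ = wreathAut 4 3 σ⁻¹ θ := by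
  decide

theorem z_mem_of_relIndex_dvd_two {H : Subgroup (Gmpn 4 4 3)} (h : H.relIndex V ∣ 2) :
    z ∈ H := by
  let v : Apn 4 4 3 := ⟨![ofAdd 1, ofAdd 1, ofAdd 2], by decide⟩
  have hv : ofBase v ∈ V := rfl
  have hsq : ofBase v ^ 2 = z := by
    rw [← map_pow]
    exact congrArg ofBase (Subtype.ext (by decide))
  have := Subgroup.sq_mem_of_index_dvd_two h ⟨ofBase v, hv⟩
  rwa [Subgroup.mem_subgroupOf, Subgroup.coe_pow, hsq] at this

theorem two_dvd_card_inf_V {H : Subgroup (Gmpn 4 4 3)} (h16 : H.relIndex V < 16) :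
    2 ∣ Nat.card ↥(H ⊓ V) := by
  have hcard : Nat.card ↥(H ⊓ V) * H.relIndex V = 16 := by
    rw [← Subgroup.relIndex_bot_left, ← Subgroup.inf_relIndex_right H V,
      Subgroup.relIndex_mul_relIndex _ _ _ bot_le inf_le_right, Subgroup.relIndex_bot_left, card_V]
  refine ((IsPGroup.of_card (n := 4) card_V).to_le inf_le_right).card_eq_or_dvd.resolve_left ?_
  intro h1
  rw [h1, one_mul] at hcard
  omega

theorem z_mem_of_conj_eq {H : Subgroup (Gmpn 4 4 3)} {θ : Apn 4 4 3} (hθ : ofBase θ ∈ H)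
    {k : Gmpn 4 4 3} (hk : k ∈ H) (e : θ₀ = wreathAut 4 3 (toPerm k) θ) : z ∈ H := by
  have hz : z = k * ofBase θ * k⁻¹ := by
    rw [mul_ofBase_mul_inv]
    exact congrArg ofBase (Subtype.ext e)
  exact hz ▸ H.mul_mem (H.mul_mem hk hθ) (H.inv_mem hk)

theorem z_mem_of_three_dvd {H : Subgroup (Gmpn 4 4 3)} (h3 : 3 ∣ Nat.card (H.map toPerm))
    (h16 : H.relIndex V < 16) : z ∈ H := by
  obtain ⟨σ, hσ⟩ := exists_prime_orderOf_dvd_card' (G := H.map toPerm) 3 h3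
  obtain ⟨g, hgH, hgσ⟩ := Subgroup.mem_map.1 σ.2
  have hg : orderOf (toPerm g) = 3 := by rw [hgσ, Subgroup.orderOf_coe, hσ]
  obtain ⟨w, hw⟩ := exists_prime_orderOf_dvd_card' 2 (two_dvd_card_inf_V h16)
  obtain ⟨θ, hθ⟩ : (w : Gmpn 4 4 3) ∈ ofBase.range := range_ofBase ▸ w.2.2
  have hθ1 : θ ≠ 1 := by
    rintro rfl
    rw [← Subgroup.orderOf_coe, ← hθ, map_one, orderOf_one] at hw
    exact absurd hw (by decide)
  have hθ2 : θ * θ = 1 := ofBase_injective <| by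
    rw [map_mul, hθ, ← pow_two, ← Subgroup.coe_pow, ← hw, pow_orderOf_eq_one, map_one]
    rfl
  have hθH : ofBase θ ∈ H := hθ ▸ w.2.1
  rcases eq_θ₀_of_involution (toPerm g) (fun h => by simp [h] at hg)
      (by simpa [hg] using pow_orderOf_eq_one (toPerm g)) θ θ.2 (congrArg Subtype.val hθ2)
      (fun h => hθ1 (Subtype.ext h)) with e | e | e
  · exact z_mem_of_conj_eq hθH H.one_mem (by simpa using e)
  · exact z_mem_of_conj_eq hθH hgH e
  · exact z_mem_of_conj_eq hθH (H.inv_mem hgH) (by simpa using e)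

theorem z_mem_of_index_lt_twelve {H : Subgroup (Gmpn 4 4 3)} (hH : H.index < 12) : z ∈ H := by
  have hrel : H.relIndex V * 6 = Nat.card (H.map toPerm) * H.index := by
    rw [← Subgroup.relIndex_ker, ← Subgroup.relIndex_mul_index_eq, index_ker_toPerm]
    rfl
  have hr : H.relIndex V ∣ 16 := card_V ▸ Subgroup.relIndex_dvd_card H V
  have hq : Nat.card (H.map toPerm) ∣ 6 :=
    (Subgroup.card_subgroup_dvd_card _).trans (by rw [Nat.card_perm, Nat.card_fin]; decide)
  have hi : H.index ≠ 0 := Subgroup.index_ne_zero_of_finite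
  have hcases : H.relIndex V ∣ 2 ∨ 3 ∣ Nat.card (H.map toPerm) ∧ H.relIndex V < 16 := by
    have := Nat.le_of_dvd (by norm_num) hr
    have := Nat.le_of_dvd (by norm_num) hq
    interval_cases H.relIndex V <;> interval_cases Nat.card (H.map toPerm) <;> omega
  rcases hcases with h2 | ⟨h3, h16⟩
  · exact z_mem_of_relIndex_dvd_two h2
  · exact z_mem_of_three_dvd h3 h16

end G443

theorem stmt13 : mu (Gmpn 4 4 3) = 12 :=
  IsLeast.csInf_eq ⟨Gmpn.exists_injective_hom_perm_fin 4 4 3, fun _ ⟨_, hf⟩ =>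
    le_of_injective_of_forall_index_lt_mem G443.z_ne_one
      (fun _ => G443.z_mem_of_index_lt_twelve) hf⟩
end

section
/- The subgroup ⟨x, y⟩ ≅ C₄ × C₄ of G(4,4,3) forces μ(G(4,4,3)) ≥ 8, and the embedding G(4,4,3) ≤ C₄ ≀ Sym(3) gives μ(G(4,4,3)) ≤ 12. -/
open Multiplicative

/-!
Pairs `(a, b)` of elements of `C₄` embed in `G(4,4,3)` as the diagonal matrices with entries
`a, b, (ab)⁻¹`. For the lower bound, a faithful action on `n` points makes
`|G(4,4,3)| = 16 · 3! = 2⁵ · 3` divide `n!`, and `2⁵ ∤ 7!`. For the upper bound, `C₄ ≀ Sym(3)`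
acts faithfully on `3 · 4` points, permuting three blocks of size four.
-/

open scoped Nat

section FaithfulDegree

variable {G : Type*} [Group G]

lemma exists_injective_perm_of_finite {α : Type*} [Finite α] (f : G →* Equiv.Perm α)
    (hf : Function.Injective f) :
    ∃ g : G →* Equiv.Perm (Fin (Nat.card α)), Function.Injective g :=
  let e := (Finite.equivFin α).permCongrHom
  ⟨e.toMonoidHom.comp f, e.injective.comp hf⟩

lemma mu_le_card_of_injective {α : Type*} [Finite α] (f : G →* Equiv.Perm α)
    (hf : Function.Injective f) : mu G ≤ Nat.card α :=
  Nat.sInf_le (exists_injective_perm_of_finite f hf)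

lemma exists_injective_perm_fin_mu [Finite G] :
    ∃ f : G →* Equiv.Perm (Fin (mu G)), Function.Injective f :=
  Nat.sInf_mem (s := {n | ∃ f : G →* Equiv.Perm (Fin n), Function.Injective f})
    ⟨_, exists_injective_perm_of_finite (MulAction.toPermHom G G) MulAction.toPerm_injective⟩

lemma card_dvd_factorial_of_injective {n : ℕ} (f : G →* Equiv.Perm (Fin n))
    (hf : Function.Injective f) : Nat.card G ∣ n ! := by
  simpa [Fintype.card_perm] using Subgroup.card_dvd_of_injective f hf

lemma le_mu_of_not_dvd_factorial [Finite G] {k : ℕ} (h : ∀ n < k, ¬ Nat.card G ∣ n !) :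
    k ≤ mu G := by
  by_contra! hlt
  obtain ⟨f, hf⟩ := exists_injective_perm_fin_mu (G := G)
  exact h _ hlt (card_dvd_factorial_of_injective f hf)

end FaithfulDegree

section WreathProduct

variable {m n : ℕ}

def wreathPermRep (m n : ℕ) : Wr m n →* Equiv.Perm (Fin n × Cyc m) where
  toFun g :=
    { toFun := fun p => (g.right p.1, g.left (g.right p.1) * p.2)
      invFun := fun p => (g.right.symm p.1, (g.left p.1)⁻¹ * p.2)
      left_inv := fun p => by simp
      right_inv := fun p => by simp }
  map_one' := by ext p <;> simp
  map_mul' g h := by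
    ext p <;> simp [SemidirectProduct.mul_left, wreathAut, mul_assoc]

lemma wreathPermRep_injective : Function.Injective (wreathPermRep m n) := by
  rw [injective_iff_map_eq_one]
  intro g hg
  have fix (p : Fin n × Cyc m) : wreathPermRep m n g p = p := by rw [hg]; rfl
  have hright : g.right = 1 := Equiv.ext fun i => congrArg Prod.fst (fix (i, 1))
  have hleft : g.left = 1 := funext fun i => by
    simpa [wreathPermRep, hright] using congrArg Prod.snd (fix (i, 1))
  exact SemidirectProduct.ext hleft hright

lemma mu_subgroup_wr_le [NeZero m] (H : Subgroup (Wr m n)) : mu H ≤ n * m := by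
  simpa using mu_le_card_of_injective ((wreathPermRep m n).comp H.subtype)
    (wreathPermRep_injective.comp H.subtype_injective)

end WreathProduct

section ComplexReflectionGroup

variable {m p n : ℕ}

instance : DecidablePred (· ∈ Apn m p n) :=
  fun θ => decidable_of_iff ((∏ i, θ i) ^ (m / p) = 1) Iff.rfl

def gmpnEquivProd (m p n : ℕ) : Gmpn m p n ≃ Apn m p n × Equiv.Perm (Fin n) where
  toFun g := (⟨g.1.left, g.2⟩, g.1.right)
  invFun x := ⟨⟨x.1.1, x.2⟩, x.1.2⟩
  left_inv _ := rfl
  right_inv _ := rfl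

instance [NeZero m] : Finite (Gmpn m p n) :=
  Finite.of_equiv _ (gmpnEquivProd m p n).symm

lemma card_gmpn : Nat.card (Gmpn m p n) = Nat.card (Apn m p n) * n ! := by
  rw [Nat.card_congr (gmpnEquivProd m p n), Nat.card_prod, Nat.card_perm, Nat.card_fin]

def cycPairToGmpn (m p : ℕ) : Cyc m × Cyc m →* Gmpn m p 3 :=
  MonoidHom.codRestrict
    (SemidirectProduct.inl.comp <| MonoidHom.pi
      ![MonoidHom.fst _ _, MonoidHom.snd _ _, (MonoidHom.fst _ _ * MonoidHom.snd _ _)⁻¹])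
    (Gmpn m p 3) fun x => by
      show (∏ i, _) ^ (m / p) = 1
      simp [Fin.prod_univ_three]

lemma cycPairToGmpn_injective : Function.Injective (cycPairToGmpn m p) := by
  intro x y h
  have h' := congrArg (fun g : Gmpn m p 3 => g.1.left) h
  exact Prod.ext (congrFun h' 0) (congrFun h' 1)

end ComplexReflectionGroup

lemma card_gmpn_four_four_three : Nat.card (Gmpn 4 4 3) = 96 := by
  have : Nat.card (Apn 4 4 3) = 16 := by rw [Nat.card_eq_fintype_card]; decide
  rw [card_gmpn, this]
  rfl

theorem stmt19 :
    (∃ B : Subgroup (Gmpn 4 4 3), Nonempty (B ≃* (Cyc 4 × Cyc 4))) ∧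
    8 ≤ mu (Gmpn 4 4 3) ∧
    (∃ f : Gmpn 4 4 3 →* Wr 4 3, Function.Injective f) ∧
    mu (Gmpn 4 4 3) ≤ 12 := by
  refine ⟨⟨_, ⟨(MonoidHom.ofInjective cycPairToGmpn_injective).symm⟩⟩, ?_,
    ⟨_, (Gmpn 4 4 3).subtype_injective⟩, mu_subgroup_wr_le (Gmpn 4 4 3)⟩
  refine le_mu_of_not_dvd_factorial fun n hn hdvd => ?_
  rw [card_gmpn_four_four_three] at hdvd
  have : 96 ∣ 7 ! := hdvd.trans (Nat.factorial_dvd_factorial (by omega))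
  norm_num [Nat.factorial] at this
end
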